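/- arXiv:1606.03275 — 3 statements merged into one kernel-verified Lean document; each statement's English description precedes it below -/
import Mathlib

section
/- Let (p_n) be a sequence in (0,1] with p_n → 0. For each n let J_n be a partition of {1,...,n} such that every block of J_n has size at most n·p_n. Then the n-th root of (∏_{J ∈ J_n} |J|!)/n! converges to 0 as n → ∞. -/
/-!
Bounding each `|J|!` by `(n p_n)^{|J|}` gives `∏ |J|! ≤ (n p_n)^n`, while `n^n ≤ e^n n!`.
Hence the ratio is at most `(e p_n)^n`, and its `n`-th root is at most `e p_n → 0`.
-/

open Nat Real Filter Topology

theorem Finpartition.prod_factorial_card_le_pow {α : Type*} [DecidableEq α] {s : Finset α}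
    (P : Finpartition s) {b : ℝ} (hb : ∀ J ∈ P.parts, (J.card : ℝ) ≤ b) :
    ((∏ J ∈ P.parts, J.card ! : ℕ) : ℝ) ≤ b ^ s.card := by
  rw [← P.sum_card_parts, ← Finset.prod_pow_eq_pow_sum]
  push_cast
  refine Finset.prod_le_prod (fun J _ => by positivity) fun J hJ => ?_
  calc (J.card ! : ℝ) ≤ (J.card : ℝ) ^ J.card := mod_cast Nat.factorial_le_pow _
    _ ≤ b ^ J.card := pow_le_pow_left₀ (by positivity) (hb J hJ) _

theorem Real.pow_le_exp_one_pow_mul_factorial (n : ℕ) : (n : ℝ) ^ n ≤ exp 1 ^ n * n ! := by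
  rw [exp_one_pow, ← div_le_iff₀ (by positivity)]
  exact pow_div_factorial_le_exp _ n.cast_nonneg n

theorem Finpartition.prod_factorial_card_div_factorial_le {n : ℕ}
    (P : Finpartition (Finset.univ : Finset (Fin n))) {c : ℝ} (hc : 0 ≤ c)
    (hP : ∀ J ∈ P.parts, (J.card : ℝ) ≤ n * c) :
    ((∏ J ∈ P.parts, J.card ! : ℕ) : ℝ) / n ! ≤ (exp 1 * c) ^ n := by
  rw [div_le_iff₀ (by positivity)]
  calc ((∏ J ∈ P.parts, J.card ! : ℕ) : ℝ) ≤ (n * c) ^ n := by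
        simpa using P.prod_factorial_card_le_pow hP
    _ = (n : ℝ) ^ n * c ^ n := mul_pow _ _ _
    _ ≤ (exp 1 ^ n * n !) * c ^ n := by
        gcongr
        exact pow_le_exp_one_pow_mul_factorial n
    _ = (exp 1 * c) ^ n * n ! := by ring

theorem Real.rpow_one_div_le_of_le_pow {x a : ℝ} {n : ℕ} (hx : 0 ≤ x) (ha : 0 ≤ a)
    (hn : n ≠ 0) (h : x ≤ a ^ n) : x ^ (1 / n : ℝ) ≤ a := by
  rwa [one_div, rpow_inv_le_iff_of_pos hx ha (by positivity), rpow_natCast]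

theorem stmt4_general (p : ℕ → ℝ)
    (hp0 : Filter.Tendsto p Filter.atTop (nhds 0))
    (𝒥 : (n : ℕ) → Finpartition (Finset.univ : Finset (Fin n)))
    (hsize : ∀ n, ∀ J ∈ (𝒥 n).parts, (J.card : ℝ) ≤ n * p n) :
    Filter.Tendsto
      (fun n : ℕ =>
        (((∏ J ∈ (𝒥 n).parts, Nat.factorial J.card : ℕ) : ℝ) / Nat.factorial n)
          ^ ((1 : ℝ) / n))
      Filter.atTop (nhds 0) := by
  have hbound : Tendsto (fun n => exp 1 * |p n|) atTop (𝓝 0) := by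
    simpa using hp0.abs.const_mul (exp 1)
  refine squeeze_zero' (Eventually.of_forall fun n => rpow_nonneg (by positivity) _) ?_ hbound
  filter_upwards [eventually_ne_atTop 0] with n hn
  have hsize_abs : ∀ J ∈ (𝒥 n).parts, (J.card : ℝ) ≤ n * |p n| := fun J hJ =>
    (hsize n J hJ).trans (by gcongr; exact le_abs_self _)
  exact rpow_one_div_le_of_le_pow (by positivity) (by positivity) hn
    ((𝒥 n).prod_factorial_card_div_factorial_le (abs_nonneg _) hsize_abs)

/-- if `p n → 0` with `p n ∈ (0,1]` and every block of the
partition `𝒥 n` of `{1,…,n}` has size at most `n · p n`, then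
`((∏_{J ∈ 𝒥 n} |J|!)/n!)^{1/n} → 0`. -/
theorem stmt4 (p : ℕ → ℝ) (hp : ∀ n, p n ∈ Set.Ioc (0 : ℝ) 1)
    (hp0 : Filter.Tendsto p Filter.atTop (nhds 0))
    (𝒥 : (n : ℕ) → Finpartition (Finset.univ : Finset (Fin n)))
    (hsize : ∀ n, ∀ J ∈ (𝒥 n).parts, (J.card : ℝ) ≤ n * p n) :
    Filter.Tendsto
      (fun n : ℕ =>
        (((∏ J ∈ (𝒥 n).parts, Nat.factorial J.card : ℕ) : ℝ) / Nat.factorial n)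
          ^ ((1 : ℝ) / n))
      Filter.atTop (nhds 0) :=
  stmt4_general p hp0 𝒥 hsize
end

section
/- Let P be the uniform distribution on [−1,1] and, for a partition of [−1,1] into n equal consecutive subintervals A_1,...,A_n, define Δ_n = (R²/2)·Σ_i P(A_i)·(E[X | X ∈ A_i])² + Σ_i P(A_i) ln P(A_i). Then Δ_n = (R²/2)·(1 − 1/n²)/3 − ln n = R²(n²−1)/(6n²) − ln n, and the value of Δ_n over positive integers n is maximized at n = ⌊R/√3⌋ or n = ⌈R/√3⌉. -/
lemma stmt8s1 (n : ℕ) : ∑ i ∈ Finset.range n, (2*(i:ℝ)+1) = (n:ℝ)^2 := by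
  induction n with
  | zero => simp
  | succ k ih => rw [Finset.sum_range_succ, ih]; push_cast; ring

lemma stmt8s2 (n : ℕ) :
    ∑ i ∈ Finset.range n, (2*(i:ℝ)+1)^2 = (n:ℝ)*(4*(n:ℝ)^2-1)/3 := by
  induction n with
  | zero => simp
  | succ k ih => rw [Finset.sum_range_succ, ih]; push_cast; ring

lemma stmt8s3 (n : ℕ) :
    ∑ i ∈ Finset.range n, ((2*(i:ℝ)+1) - n)^2 = (n:ℝ)*((n:ℝ)^2-1)/3 := by
  have h : ∑ i ∈ Finset.range n, ((2*(i:ℝ)+1) - n)^2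
      = ∑ i ∈ Finset.range n, ((2*(i:ℝ)+1)^2 - 2*(n:ℝ)*(2*(i:ℝ)+1) + (n:ℝ)^2) := by
    apply Finset.sum_congr rfl; intro i _; ring
  rw [h, Finset.sum_add_distrib, Finset.sum_sub_distrib, ← Finset.mul_sum,
    stmt8s1, stmt8s2]
  simp [Finset.sum_const, Finset.card_range, nsmul_eq_mul]
  ring

lemma stmt8key (n : ℕ) (hn : 1 ≤ n) :
    (1/(n:ℝ)) * ∑ i ∈ Finset.range n, ((2*((i:ℝ)+1)-1)/n - 1)^2
      = (1 - 1/(n:ℝ)^2)/3 := by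
  have hn0 : (n:ℝ) ≠ 0 := Nat.cast_ne_zero.mpr (by omega)
  have h : ∑ i ∈ Finset.range n, ((2*((i:ℝ)+1)-1)/n - 1)^2
      = ((n:ℝ)^2)⁻¹ * ∑ i ∈ Finset.range n, ((2*(i:ℝ)+1) - n)^2 := by
    rw [Finset.mul_sum]
    apply Finset.sum_congr rfl; intro i _
    field_simp
    ring
  rw [h, stmt8s3]
  field_simp

/-- for the uniform distribution on `[-1,1]` partitioned into `n`
equal consecutive subintervals, `Δ_n = (R²/2)·(1/n)·∑_{i=1}^n ((2i−1)/n − 1)²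
− ln n` simplifies to `(R²/2)·(1 − 1/n²)/3 − ln n`, and over positive integers
`Δ_n` is maximised at `n = ⌊R/√3⌋` or `n = ⌈R/√3⌉`. -/
theorem stmt8 (R : ℝ) (hR : 0 < R) (Δ : ℕ → ℝ)
    (hΔ : ∀ n : ℕ, 1 ≤ n →
      Δ n = (R ^ 2 / 2) * ((1 / (n : ℝ)) *
          ∑ i ∈ Finset.range n, ((2 * ((i : ℝ) + 1) - 1) / n - 1) ^ 2) -
        Real.log n) :
    (∀ n : ℕ, 1 ≤ n →
        Δ n = (R ^ 2 / 2) * ((1 - 1 / (n : ℝ) ^ 2) / 3) - Real.log n) ∧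
    ((∀ m : ℕ, 1 ≤ m → Δ m ≤ Δ ⌊R / Real.sqrt 3⌋₊) ∨
      (∀ m : ℕ, 1 ≤ m → Δ m ≤ Δ ⌈R / Real.sqrt 3⌉₊)) := by
  have hs : ∀ n : ℕ, 1 ≤ n →
      Δ n = (R ^ 2 / 2) * ((1 - 1 / (n : ℝ) ^ 2) / 3) - Real.log n := by
    intro n hn
    rw [hΔ n hn, stmt8key n hn]
  refine ⟨hs, ?_⟩
  set c : ℝ := R / Real.sqrt 3 with hc
  have h3 : (0:ℝ) < Real.sqrt 3 := Real.sqrt_pos.mpr (by norm_num)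
  have hc0 : 0 < c := div_pos hR h3
  have hc2 : c ^ 2 = R ^ 2 / 3 := by
    rw [hc, div_pow, Real.sq_sqrt (by norm_num : (0:ℝ) ≤ 3)]
  set f : ℝ → ℝ := fun x => R ^ 2 / 2 * ((1 - 1 / x ^ 2) / 3) - Real.log x with hf
  have hΔf : ∀ n : ℕ, 1 ≤ n → Δ n = f n := fun n hn => hs n hn
  have hder : ∀ x : ℝ, 0 < x → HasDerivAt f (R ^ 2 / (3 * x ^ 3) - 1 / x) x := by
    intro x hx
    have hx0 : x ≠ 0 := ne_of_gt hx
    have h1 : HasDerivAt (fun y : ℝ => y ^ 2) (2 * x) x := by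
      simpa using hasDerivAt_pow 2 x
    have h2 : HasDerivAt (fun y : ℝ => (y ^ 2)⁻¹) (-(2 * x) / (x ^ 2) ^ 2) x :=
      h1.inv (pow_ne_zero 2 hx0)
    have h4 : HasDerivAt (fun y : ℝ => R ^ 2 / 2 * ((1 - (y ^ 2)⁻¹) / 3))
        (R ^ 2 / 2 * ((-(-(2 * x) / (x ^ 2) ^ 2)) / 3)) x :=
      ((h2.const_sub 1).div_const 3).const_mul _
    have h5 := h4.sub (Real.hasDerivAt_log hx0)
    have hfun : f = fun y : ℝ => R ^ 2 / 2 * ((1 - (y ^ 2)⁻¹) / 3) - Real.log y := by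
      funext y; simp only [hf, one_div]
    rw [hfun]
    refine h5.congr_deriv ?_
    field_simp
  have hmono : MonotoneOn f (Set.Icc 1 c) := by
    apply monotoneOn_of_deriv_nonneg (convex_Icc 1 c)
    · intro x hx
      exact (hder x (lt_of_lt_of_le one_pos hx.1)).differentiableAt.continuousAt.continuousWithinAt
    · intro x hx
      rw [interior_Icc] at hx
      exact (hder x (by linarith [hx.1])).differentiableAt.differentiableWithinAt
    · intro x hx
      rw [interior_Icc] at hx
      obtain ⟨hx1, hxc⟩ := hx
      have hxpos : (0:ℝ) < x := by linarith
      rw [(hder x hxpos).deriv]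
      have hxx : x ^ 2 ≤ R ^ 2 / 3 := by
        have h := pow_le_pow_left₀ hxpos.le hxc.le 2
        rw [hc2] at h; exact h
      rw [sub_nonneg, div_le_div_iff₀ hxpos (by positivity)]
      nlinarith
  have hanti : AntitoneOn f (Set.Ici (max c 1)) := by
    apply antitoneOn_of_deriv_nonpos (convex_Ici _)
    · intro x hx
      have : (0:ℝ) < x := lt_of_lt_of_le one_pos (le_trans (le_max_right c 1) hx)
      exact (hder x this).differentiableAt.continuousAt.continuousWithinAt
    · intro x hx
      rw [interior_Ici] at hx
      have : (0:ℝ) < x := lt_of_le_of_lt (le_trans zero_le_one (le_max_right c 1)) hx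
      exact (hder x this).differentiableAt.differentiableWithinAt
    · intro x hx
      rw [interior_Ici] at hx
      have hxc : c < x := lt_of_le_of_lt (le_max_left c 1) hx
      have hxpos : (0:ℝ) < x := lt_trans hc0 hxc
      rw [(hder x hxpos).deriv]
      have hxx : R ^ 2 / 3 ≤ x ^ 2 := by
        have h := pow_le_pow_left₀ hc0.le hxc.le 2
        rw [hc2] at h; exact h
      rw [sub_nonpos, div_le_div_iff₀ (by positivity) hxpos]
      nlinarith
  rcases le_or_gt c 1 with hle | hgt
  · right
    intro m hm
    have hb1 : 1 ≤ ⌈c⌉₊ := Nat.one_le_ceil_iff.mpr hc0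
    have hble : ⌈c⌉₊ ≤ 1 := Nat.ceil_le.mpr (by exact_mod_cast hle)
    have hbm : ⌈c⌉₊ ≤ m := le_trans hble hm
    rw [hΔf m hm, hΔf _ hb1]
    apply hanti
    · exact Set.mem_Ici.mpr (max_le (Nat.le_ceil c) (by exact_mod_cast hb1))
    · exact Set.mem_Ici.mpr (max_le (le_trans hle (by exact_mod_cast hm))
        (by exact_mod_cast hm))
    · exact_mod_cast hbm
  · have ha1 : 1 ≤ ⌊c⌋₊ := Nat.le_floor (by exact_mod_cast hgt.le)
    have hac : (⌊c⌋₊ : ℝ) ≤ c := Nat.floor_le hc0.le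
    have hcb : c ≤ (⌈c⌉₊ : ℝ) := Nat.le_ceil c
    have hb1 : 1 ≤ ⌈c⌉₊ := Nat.one_le_ceil_iff.mpr hc0
    have hba : ⌈c⌉₊ ≤ ⌊c⌋₊ + 1 := Nat.ceil_le_floor_add_one c
    have hmax : max c 1 = c := max_eq_left hgt.le
    have hmono_le : ∀ m : ℕ, 1 ≤ m → m ≤ ⌊c⌋₊ → Δ m ≤ Δ ⌊c⌋₊ := by
      intro m hm hma
      rw [hΔf m hm, hΔf _ ha1]
      apply hmono
      · exact ⟨by exact_mod_cast hm, le_trans (by exact_mod_cast hma) hac⟩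
      · exact ⟨by exact_mod_cast ha1, hac⟩
      · exact_mod_cast hma
    have hanti_le : ∀ m : ℕ, ⌊c⌋₊ < m → Δ m ≤ Δ ⌈c⌉₊ := by
      intro m hma
      have hbm : ⌈c⌉₊ ≤ m := le_trans hba hma
      have hm1 : 1 ≤ m := le_trans hb1 hbm
      rw [hΔf m hm1, hΔf _ hb1]
      apply hanti
      · rw [Set.mem_Ici, hmax]; exact hcb
      · rw [Set.mem_Ici, hmax]; exact le_trans hcb (by exact_mod_cast hbm)
      · exact_mod_cast hbm
    rcases le_total (Δ ⌈c⌉₊) (Δ ⌊c⌋₊) with hd | hd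
    · left
      intro m hm
      rcases le_or_gt m ⌊c⌋₊ with h | h
      · exact hmono_le m hm h
      · exact (hanti_le m h).trans hd
    · right
      intro m hm
      rcases le_or_gt m ⌊c⌋₊ with h | h
      · exact (hmono_le m hm h).trans hd
      · exact hanti_le m h
end

section
/- Let (F, d) be a finitely compact pseudometric space (every bounded sequence has a convergent subsequence). Then for every positive integer K, the space (F_K(F), d̄) of at-most-K-element subsets of F with the matching pseudometric d̄ is also finitely compact. -/
/-- The matching distance `d̄` on `K`-tuples: minimum over permutations of the
maximal pairwise distance. -/
noncomputable def matchDist' {F : Type*} (d : F → F → ℝ) {K : ℕ} (hK : 0 < K)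
    (A B : Fin K → F) : ℝ :=
  Finset.inf' (Finset.univ : Finset (Equiv.Perm (Fin K))) ⟨Equiv.refl _, by simp⟩
    (fun σ => Finset.sup' Finset.univ ⟨(⟨0, hK⟩ : Fin K), by simp⟩
      (fun i => d (A i) (B (σ i))))

/-!
A bounded sequence of `K`-tuples has bounded coordinate sequences: an optimal matching puts
every coordinate of `A n` within `C` of some coordinate of `A 0`, and the finitely many
coordinates of `A 0` are at bounded distance from each other. Extracting convergent
subsequences coordinate by coordinate gives a subsequence converging coordinatewise to a tuple
`L`, and `d̄(A n, L)` is at most the sum of the coordinate distances (take the identity matching).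
-/

open Filter Topology

section

variable {F : Type*} (d : F → F → ℝ)

def FinitelyCompact : Prop :=
  ∀ x : ℕ → F, (∃ C : ℝ, ∀ m n, d (x m) (x n) ≤ C) →
    ∃ (φ : ℕ → ℕ) (L : F), StrictMono φ ∧ Tendsto (fun n => d (x (φ n)) L) atTop (𝓝 0)

variable {d}

theorem FinitelyCompact.exists_strictMono_forall_tendsto (hd : FinitelyCompact d) :
    ∀ {m : ℕ} (s : Fin m → ℕ → F), (∀ i, ∃ C : ℝ, ∀ p q, d (s i p) (s i q) ≤ C) →
      ∃ (φ : ℕ → ℕ) (L : Fin m → F), StrictMono φ ∧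
        ∀ i, Tendsto (fun n => d (s i (φ n)) (L i)) atTop (𝓝 0)
  | 0, _, _ => ⟨id, Fin.elim0, strictMono_id, fun i => i.elim0⟩
  | m + 1, s, hs => by
    obtain ⟨φ₀, L₀, hφ₀, hL₀⟩ :=
      hd.exists_strictMono_forall_tendsto (fun i => s i.castSucc) (fun i => hs i.castSucc)
    obtain ⟨C, hC⟩ := hs (Fin.last m)
    obtain ⟨φ₁, L, hφ₁, hL⟩ := hd (fun n => s (Fin.last m) (φ₀ n)) ⟨C, fun p q => hC _ _⟩
    refine ⟨φ₀ ∘ φ₁, Fin.lastCases L L₀, hφ₀.comp hφ₁, Fin.lastCases ?_ fun i => ?_⟩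
    · simpa using hL
    · simpa [Function.comp_def] using (hL₀ i).comp hφ₁.tendsto_atTop

variable {K : ℕ} (hK : 0 < K)

theorem matchDist'_nonneg (hnonneg : ∀ x y, 0 ≤ d x y) (A B : Fin K → F) :
    0 ≤ matchDist' d hK A B :=
  Finset.le_inf' _ _ fun σ _ =>
    (hnonneg _ _).trans (Finset.le_sup' (fun i => d (A i) (B (σ i))) (Finset.mem_univ ⟨0, hK⟩))

theorem matchDist'_le_sum (hnonneg : ∀ x y, 0 ≤ d x y) (A B : Fin K → F) :
    matchDist' d hK A B ≤ ∑ i, d (A i) (B i) :=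
  (Finset.inf'_le _ (Finset.mem_univ (Equiv.refl _))).trans <|
    Finset.sup'_le _ _ fun i _ =>
      Finset.single_le_sum (f := fun i => d (A i) (B i)) (fun _ _ => hnonneg _ _)
        (Finset.mem_univ i)

theorem exists_perm_forall_le_matchDist' (A B : Fin K → F) :
    ∃ σ : Equiv.Perm (Fin K), ∀ i, d (A i) (B (σ i)) ≤ matchDist' d hK A B := by
  obtain ⟨σ, -, hσ⟩ := Finset.exists_mem_eq_inf' Finset.univ_nonempty
    (fun σ : Equiv.Perm (Fin K) =>
      Finset.sup' Finset.univ ⟨⟨0, hK⟩, Finset.mem_univ _⟩ fun i => d (A i) (B (σ i)))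
  exact ⟨σ, fun i => (Finset.le_sup' (fun i => d (A i) (B (σ i))) (Finset.mem_univ i)).trans
    hσ.ge⟩

theorem exists_coord_dist_le_of_forall_matchDist'_le (hsymm : ∀ x y, d x y = d y x)
    (htri : ∀ x y z, d x z ≤ d x y + d y z) {A : ℕ → Fin K → F} {C : ℝ}
    (hC : ∀ m n, matchDist' d hK (A m) (A n) ≤ C) (i : Fin K) :
    ∃ C' : ℝ, ∀ p q, d (A p i) (A q i) ≤ C' := by
  have hnear : ∀ n, ∃ j, d (A n i) (A 0 j) ≤ C := fun n => by
    obtain ⟨σ, hσ⟩ := exists_perm_forall_le_matchDist' hK (A 0) (A n)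
    refine ⟨σ.symm i, ?_⟩
    simpa [hsymm (A n i)] using (hσ (σ.symm i)).trans (hC 0 n)
  obtain ⟨D, hD⟩ :=
    (Set.finite_range fun jj : Fin K × Fin K => d (A 0 jj.1) (A 0 jj.2)).bddAbove
  refine ⟨C + D + C, fun p q => ?_⟩
  obtain ⟨j, hj⟩ := hnear p
  obtain ⟨j', hj'⟩ := hnear q
  have hjj' : d (A 0 j) (A 0 j') ≤ D := hD ⟨(j, j'), rfl⟩
  calc d (A p i) (A q i) ≤ d (A p i) (A 0 j) + d (A 0 j) (A 0 j') + d (A 0 j') (A q i) := by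
        linarith [htri (A p i) (A 0 j') (A q i), htri (A p i) (A 0 j) (A 0 j')]
    _ ≤ C + D + C := by rw [hsymm (A 0 j')]; linarith

theorem tendsto_matchDist'_zero_of_forall_tendsto (hnonneg : ∀ x y, 0 ≤ d x y)
    {A : ℕ → Fin K → F} {L : Fin K → F} (hL : ∀ i, Tendsto (fun n => d (A n i) (L i)) atTop (𝓝 0)) :
    Tendsto (fun n => matchDist' d hK (A n) L) atTop (𝓝 0) := by
  have hsum : Tendsto (fun n => ∑ i, d (A n i) (L i)) atTop (𝓝 0) := by
    simpa using tendsto_finsetSum Finset.univ fun i _ => hL i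
  exact squeeze_zero (fun _ => matchDist'_nonneg hK hnonneg _ _)
    (fun _ => matchDist'_le_sum hK hnonneg _ _) hsum

theorem FinitelyCompact.matchDist' (hnonneg : ∀ x y, 0 ≤ d x y)
    (hsymm : ∀ x y, d x y = d y x) (htri : ∀ x y z, d x z ≤ d x y + d y z)
    (hd : FinitelyCompact d) {K : ℕ} (hK : 0 < K) :
    FinitelyCompact (matchDist' d hK) := by
  rintro A ⟨C, hC⟩
  obtain ⟨φ, L, hφ, hL⟩ := hd.exists_strictMono_forall_tendsto (fun i n => A n i)
    (exists_coord_dist_le_of_forall_matchDist'_le hK hsymm htri hC)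
  exact ⟨φ, L, hφ, tendsto_matchDist'_zero_of_forall_tendsto hK hnonneg hL⟩

end

theorem stmt12_general {F : Type*} (d : F → F → ℝ)
    (hnonneg : ∀ x y, 0 ≤ d x y)
    (hsymm : ∀ x y, d x y = d y x)
    (htri : ∀ x y z, d x z ≤ d x y + d y z)
    (hfincompact : ∀ x : ℕ → F, (∃ C : ℝ, ∀ m n, d (x m) (x n) ≤ C) →
      ∃ (φ : ℕ → ℕ) (L : F), StrictMono φ ∧
        Filter.Tendsto (fun n => d (x (φ n)) L) Filter.atTop (nhds 0))
    (K : ℕ) (hK : 0 < K) :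
    ∀ A : ℕ → Fin K → F,
      (∃ C : ℝ, ∀ m n, matchDist' d hK (A m) (A n) ≤ C) →
      ∃ (φ : ℕ → ℕ) (L : Fin K → F), StrictMono φ ∧
        Filter.Tendsto (fun n => matchDist' d hK (A (φ n)) L) Filter.atTop (nhds 0) :=
  FinitelyCompact.matchDist' hnonneg hsymm htri hfincompact hK

/-- if `(F, d)` is a finitely compact pseudometric space (every
bounded sequence has a convergent subsequence), then so is `(F_K(F), d̄)`. -/
theorem stmt12 {F : Type*} (d : F → F → ℝ)
    (hnonneg : ∀ x y, 0 ≤ d x y) (hrefl : ∀ x, d x x = 0)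
    (hsymm : ∀ x y, d x y = d y x)
    (htri : ∀ x y z, d x z ≤ d x y + d y z)
    (hfincompact : ∀ x : ℕ → F, (∃ C : ℝ, ∀ m n, d (x m) (x n) ≤ C) →
      ∃ (φ : ℕ → ℕ) (L : F), StrictMono φ ∧
        Filter.Tendsto (fun n => d (x (φ n)) L) Filter.atTop (nhds 0))
    (K : ℕ) (hK : 0 < K) :
    ∀ A : ℕ → Fin K → F,
      (∃ C : ℝ, ∀ m n, matchDist' d hK (A m) (A n) ≤ C) →
      ∃ (φ : ℕ → ℕ) (L : Fin K → F), StrictMono φ ∧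
        Filter.Tendsto (fun n => matchDist' d hK (A (φ n)) L) Filter.atTop (nhds 0) :=
  stmt12_general d hnonneg hsymm htri hfincompact K hK
end
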